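/- Under the compatibility condition for S₀ with constant φ > 0 and on the event where λ ≥ 2λ₀ with λ₀ bounding (2/n)‖Xᵀε‖_∞, the Lasso satisfies the oracle inequality (1/n)‖X(β̂ − β⁰)‖₂² + λ‖β̂ − β⁰‖₁ ≤ 4λ²s₀/φ², where s₀ = |S₀| and S₀ = supp(β⁰). -/

import Mathlib

/-!
Write `Δ = β̂ - β⁰` and `Q = (1/n)‖XΔ‖₂²`. Comparing the Lasso objective at `β̂` and at `β⁰`
gives the basic inequality `Q ≤ (2/n) εᵀXΔ + λ(‖β⁰‖₁ - ‖β̂‖₁)`. The noise term is at most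
`λ₀‖Δ‖₁ ≤ (λ/2)‖Δ‖₁`, and since `β⁰` vanishes off `S₀` the penalty difference is at most
`‖Δ_{S₀}‖₁ - ‖Δ_{S₀ᶜ}‖₁`. Together, `2Q + λ‖Δ_{S₀ᶜ}‖₁ ≤ 3λ‖Δ_{S₀}‖₁`: `Δ` lies in the cone of
the compatibility condition, and `Q + λ‖Δ‖₁ ≤ 4λ‖Δ_{S₀}‖₁ - Q ≤ 4λ²s₀/φ²` because
`4λ‖Δ_{S₀}‖₁ ≤ 4λ√(s₀Q)/φ ≤ Q + 4λ²s₀/φ²`.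
-/

open Matrix Finset

theorem mul_le_add_of_sq_le_mul {Q κ a lam : ℝ} (hQ : 0 ≤ Q) (hκ : 0 ≤ κ)
    (h : a ^ 2 ≤ κ * Q) : 4 * lam * a ≤ Q + 4 * lam ^ 2 * κ := by
  have hsq : (4 * lam * a) ^ 2 ≤ (Q + 4 * lam ^ 2 * κ) ^ 2 := by
    nlinarith [sq_nonneg (Q - 4 * lam ^ 2 * κ), mul_le_mul_of_nonneg_left h (sq_nonneg (4 * lam))]
  exact le_of_sq_le_sq hsq (by positivity)

theorem add_mul_add_le_of_cone {Q κ a b lam : ℝ} (hQ : 0 ≤ Q) (hκ : 0 ≤ κ) (hlam : 0 ≤ lam)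
    (hcone : 2 * Q + lam * b ≤ 3 * lam * a)
    (hcompat : b ≤ 3 * a → a ≠ 0 → a ^ 2 ≤ κ * Q) :
    Q + lam * (a + b) ≤ 4 * lam ^ 2 * κ := by
  suffices 4 * lam * a ≤ Q + 4 * lam ^ 2 * κ by linarith
  rcases hlam.eq_or_lt with rfl | hlam
  · simpa using hQ
  by_cases ha : a = 0
  · rw [ha, mul_zero]; positivity
  have hb : b ≤ 3 * a := le_of_mul_le_mul_left (by linarith) hlam
  exact mul_le_add_of_sq_le_mul hQ hκ (hcompat hb ha)

section

variable {m ι : Type*} [Fintype m] [Fintype ι]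

theorem sum_sq_sub (u v : ι → ℝ) :
    ∑ i, (u i - v i) ^ 2 = ∑ i, u i ^ 2 - 2 * ∑ i, u i * v i + ∑ i, v i ^ 2 := by
  simp only [sub_sq, sum_add_distrib, sum_sub_distrib, mul_sum, mul_assoc]

theorem dotProduct_le_mul_sum_abs {u v : ι → ℝ} {M : ℝ} (hu : ∀ j, |u j| ≤ M) :
    u ⬝ᵥ v ≤ M * ∑ j, |v j| := by
  rw [dotProduct, mul_sum]
  refine sum_le_sum fun j _ => ?_
  calc u j * v j ≤ |u j| * |v j| := by rw [← abs_mul]; exact le_abs_self _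
    _ ≤ M * |v j| := mul_le_mul_of_nonneg_right (hu j) (abs_nonneg _)

theorem sum_abs_sub_sum_abs_le [DecidableEq ι] {S : Finset ι} {β₀ β : ι → ℝ}
    (hβ₀ : ∀ j ∉ S, β₀ j = 0) :
    ∑ j, |β₀ j| - ∑ j, |β j| ≤ ∑ j ∈ S, |β j - β₀ j| - ∑ j ∈ Sᶜ, |β j - β₀ j| := by
  rw [← sum_add_sum_compl S, ← sum_add_sum_compl S (fun j => |β j|)]
  have hout : ∀ j ∈ Sᶜ, |β₀ j| = 0 ∧ |β j - β₀ j| = |β j| := fun j hj => by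
    simp [hβ₀ j (mem_compl.mp hj)]
  have hin : ∑ j ∈ S, (|β₀ j| - |β j|) ≤ ∑ j ∈ S, |β j - β₀ j| :=
    sum_le_sum fun j _ => abs_sub_comm (β j) (β₀ j) ▸ abs_sub_abs_le_abs_sub _ _
  rw [sum_congr rfl fun j hj => (hout j hj).1, sum_congr rfl fun j hj => (hout j hj).2,
    sum_sub_distrib] at *
  simp only [sum_const_zero, add_zero]
  linarith

theorem lasso_basic_inequality (X : Matrix m ι ℝ) (β₀ β : ι → ℝ) (ε Y : m → ℝ) {c lam : ℝ}
    (hY : Y = X *ᵥ β₀ + ε)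
    (hmin : c * ∑ i, (Y i - (X *ᵥ β) i) ^ 2 + lam * ∑ j, |β j| ≤
      c * ∑ i, (Y i - (X *ᵥ β₀) i) ^ 2 + lam * ∑ j, |β₀ j|) :
    c * ∑ i, (X *ᵥ (β - β₀)) i ^ 2 ≤
      2 * c * (ε ⬝ᵥ X *ᵥ (β - β₀)) + lam * (∑ j, |β₀ j| - ∑ j, |β j|) := by
  have hres : ∀ i, Y i - (X *ᵥ β) i = ε i - (X *ᵥ (β - β₀)) i := fun i => by
    simp only [hY, mulVec_sub, Pi.add_apply, Pi.sub_apply]; ring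
  have hres₀ : ∀ i, Y i - (X *ᵥ β₀) i = ε i := fun i => by
    simp only [hY, Pi.add_apply, add_sub_cancel_left]
  simp only [hres, hres₀, sum_sq_sub] at hmin
  rw [dotProduct]
  linarith

theorem mul_dotProduct_mulVec_le (X : Matrix m ι ℝ) (ε : m → ℝ) (Δ : ι → ℝ) {c lam₀ : ℝ}
    (hc : 0 ≤ c) (hε : ∀ j, c * |(Xᵀ *ᵥ ε) j| ≤ lam₀) :
    c * (ε ⬝ᵥ X *ᵥ Δ) ≤ lam₀ * ∑ j, |Δ j| := by
  rw [dotProduct_mulVec, ← mulVec_transpose, ← smul_eq_mul, ← smul_dotProduct]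
  refine dotProduct_le_mul_sum_abs fun j => ?_
  rw [Pi.smul_apply, smul_eq_mul, abs_mul, abs_of_nonneg hc]
  exact hε j

end

theorem lasso_oracle_inequality_general
    {n p : ℕ}
    (X : Matrix (Fin n) (Fin p) ℝ)
    (β0 βhat : Fin p → ℝ) (ε : Fin n → ℝ) (Y : Fin n → ℝ)
    (hY : Y = fun i => X.mulVec β0 i + ε i)
    (S0 : Finset (Fin p)) (hS0 : ∀ j, j ∈ S0 ↔ β0 j ≠ 0)
    (φ : ℝ)
    -- compatibility condition for S0 with constant φ
    (hcompat : ∀ Δ : Fin p → ℝ,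
      (∑ j ∈ S0ᶜ, |Δ j|) ≤ 3 * ∑ j ∈ S0, |Δ j| →
      (∑ j ∈ S0, |Δ j|) ≠ 0 →
      (∑ j ∈ S0, |Δ j|) ^ 2 ≤
        (S0.card : ℝ) * ((1 / n) * ∑ i, (X.mulVec Δ i) ^ 2) / φ ^ 2)
    (lam lam0 : ℝ)
    -- (2/n)‖Xᵀε‖_∞ ≤ λ₀ and λ ≥ 2λ₀
    (hlam0 : ∀ j, (2 / n : ℝ) * |∑ i, X i j * ε i| ≤ lam0)
    (hlam : 2 * lam0 ≤ lam) (hlam0pos : 0 ≤ lam0)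
    -- β̂ minimizes the Lasso objective
    (hmin : ∀ β : Fin p → ℝ,
      (1 / n : ℝ) * ∑ i, (Y i - X.mulVec βhat i) ^ 2 + lam * ∑ j, |βhat j| ≤
        (1 / n : ℝ) * ∑ i, (Y i - X.mulVec β i) ^ 2 + lam * ∑ j, |β j|) :
    (1 / n : ℝ) * ∑ i, (X.mulVec (βhat - β0) i) ^ 2 +
        lam * ∑ j, |βhat j - β0 j| ≤
      4 * lam ^ 2 * (S0.card : ℝ) / φ ^ 2 := by
  have hlam_nonneg : 0 ≤ lam := by linarith
  have hbasic := lasso_basic_inequality X β0 βhat ε Y hY (hmin β0)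
  rw [mul_one_div] at hbasic
  have hnoise := mul_dotProduct_mulVec_le X ε (βhat - β0) (c := 2 / n) (by positivity) hlam0
  have hpenalty := sum_abs_sub_sum_abs_le (β := βhat) fun j hj => not_not.mp ((hS0 j).not.mp hj)
  simp only [Pi.sub_apply] at hnoise
  rw [← sum_add_sum_compl S0] at hnoise ⊢
  set a := ∑ j ∈ S0, |βhat j - β0 j|
  set b := ∑ j ∈ S0ᶜ, |βhat j - β0 j|
  have hcone : 2 * ((1 / n) * ∑ i, (X *ᵥ (βhat - β0)) i ^ 2) + lam * b ≤ 3 * lam * a := by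
    linarith [mul_le_mul_of_nonneg_left hpenalty hlam_nonneg,
      mul_le_mul_of_nonneg_right hlam (by positivity : 0 ≤ a + b)]
  rw [mul_div_assoc]
  exact add_mul_add_le_of_cone (by positivity) (by positivity) hlam_nonneg hcone
    fun hb ha => by simpa only [mul_div_right_comm, Pi.sub_apply] using hcompat (βhat - β0) hb ha

theorem lasso_oracle_inequality
    {n p : ℕ} (hn : 0 < n)
    (X : Matrix (Fin n) (Fin p) ℝ)
    (β0 βhat : Fin p → ℝ) (ε : Fin n → ℝ) (Y : Fin n → ℝ)
    (hY : Y = fun i => X.mulVec β0 i + ε i)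
    (S0 : Finset (Fin p)) (hS0 : ∀ j, j ∈ S0 ↔ β0 j ≠ 0)
    (φ : ℝ) (hφ : 0 < φ)
    -- compatibility condition for S0 with constant φ
    (hcompat : ∀ Δ : Fin p → ℝ,
      (∑ j ∈ S0ᶜ, |Δ j|) ≤ 3 * ∑ j ∈ S0, |Δ j| →
      (∑ j ∈ S0, |Δ j|) ≠ 0 →
      (∑ j ∈ S0, |Δ j|) ^ 2 ≤
        (S0.card : ℝ) * ((1 / n) * ∑ i, (X.mulVec Δ i) ^ 2) / φ ^ 2)
    (lam lam0 : ℝ)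
    -- (2/n)‖Xᵀε‖_∞ ≤ λ₀ and λ ≥ 2λ₀
    (hlam0 : ∀ j, (2 / n : ℝ) * |∑ i, X i j * ε i| ≤ lam0)
    (hlam : 2 * lam0 ≤ lam) (hlam0pos : 0 ≤ lam0)
    -- β̂ minimizes the Lasso objective
    (hmin : ∀ β : Fin p → ℝ,
      (1 / n : ℝ) * ∑ i, (Y i - X.mulVec βhat i) ^ 2 + lam * ∑ j, |βhat j| ≤
        (1 / n : ℝ) * ∑ i, (Y i - X.mulVec β i) ^ 2 + lam * ∑ j, |β j|) :
    (1 / n : ℝ) * ∑ i, (X.mulVec (βhat - β0) i) ^ 2 +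
        lam * ∑ j, |βhat j - β0 j| ≤
      4 * lam ^ 2 * (S0.card : ℝ) / φ ^ 2 :=
  lasso_oracle_inequality_general X β0 βhat ε Y hY S0 hS0 φ hcompat lam lam0 hlam0 hlam hlam0pos
    hmin
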